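/- Skew-orthogonality of even Pfaffian polynomials: let ⟨·,·⟩ be a skew-symmetric bilinear form on polynomials with moments μ_{ij} = ⟨y^i, z^j⟩, and suppose Pf((μ_{ij})_{0≤i,j≤2m-1}) ≠ 0 for all m. Define P_{2n}(z) = (1/τ_{2n+1}) · Σ_{k=0}^{2n} (-1)^k z^k Pf((μ_{ij})_{0≤i,j≤2n, i,j≠k}) where τ_{2n+1} = Pf of the bordered matrix with μ_k replaced by moments; then for each j with 0 ≤ j ≤ 2n-1, ⟨z^j, P_{2n}⟩ = 0 (i.e. P_{2n} is skew-orthogonal to all monomials of degree < 2n). -/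

import Mathlib

open Matrix Polynomial

/-- The Pfaffian of a complex `2n × 2n` matrix, defined by
`Pf(A) = (1/(2^n n!)) ∑_{σ ∈ S_{2n}} sgn(σ) ∏_{j=0}^{n-1} A_{σ(2j), σ(2j+1)}`. -/
noncomputable def pfC (n : ℕ) (A : Matrix (Fin (2 * n)) (Fin (2 * n)) ℂ) : ℂ :=
  (1 / ((2 : ℂ) ^ n * n.factorial)) *
    ∑ σ : Equiv.Perm (Fin (2 * n)),
      ((Equiv.Perm.sign σ : ℤ) : ℂ) *
        ∏ j : Fin n,
          A (σ ⟨2 * j.1, by have := j.isLt; omega⟩) (σ ⟨2 * j.1 + 1, by have := j.isLt; omega⟩)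

namespace Stmt17Aux

open Equiv

lemma val_succAbove {N : ℕ} (k : Fin (N+1)) (i : Fin N) :
    (k.succAbove i).1 = if i.1 < k.1 then i.1 else i.1 + 1 := by
  rcases Nat.lt_or_ge i.1 k.1 with h | h
  · rw [Fin.succAbove_of_castSucc_lt _ _ (by rw [Fin.lt_def]; simpa using h), if_pos h]
    simp
  · rw [Fin.succAbove_of_le_castSucc _ _ (by rw [Fin.le_def]; simpa using h), if_neg (by omega)]
    simp

def unsucc {N : ℕ} (k x : Fin (N+1)) (h : x ≠ k) : Fin N :=
  ⟨if x.1 < k.1 then x.1 else x.1 - 1, by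
    have hx := x.2; have hk := k.2
    have hne : x.1 ≠ k.1 := fun hh => h (Fin.ext hh)
    split <;> omega⟩

lemma succAbove_unsucc {N : ℕ} (k x : Fin (N+1)) (h : x ≠ k) :
    k.succAbove (unsucc k x h) = x := by
  have hne : x.1 ≠ k.1 := fun hh => h (Fin.ext hh)
  have hx := x.2; have hk := k.2
  apply Fin.ext
  rw [val_succAbove]
  simp only [unsucc]
  split_ifs <;> omega

def flip2 {N : ℕ} (q : Fin (2*N)) : Fin (2*N) :=
  ⟨if q.1 % 2 = 0 then q.1 + 1 else q.1 - 1, by have := q.2; split <;> omega⟩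

lemma flip2_val {N : ℕ} (q : Fin (2*N)) :
    (flip2 q).1 = if q.1 % 2 = 0 then q.1 + 1 else q.1 - 1 := rfl

lemma flip2_flip2 {N : ℕ} (q : Fin (2*N)) : flip2 (flip2 q) = q := by
  apply Fin.ext
  have := q.2
  simp only [flip2]
  split_ifs <;> omega

lemma flip2_ne {N : ℕ} (q : Fin (2*N)) : flip2 q ≠ q := by
  intro h
  have h2 := q.2
  have h1 := congrArg Fin.val h
  rw [flip2_val] at h1
  split_ifs at h1 <;> omega

noncomputable def pairPerm {N : ℕ} (k m : Fin (N+1)) : Equiv.Perm (Fin N) :=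
  Equiv.removeNone (((finSuccEquiv' k).symm.trans (Equiv.swap k m)).trans (finSuccEquiv' m))

lemma pairPerm_prop {N : ℕ} (k m : Fin (N+1)) (x : Fin N) :
    m.succAbove (pairPerm k m x) = Equiv.swap k m (k.succAbove x) := by
  have h1 : Equiv.swap k m (k.succAbove x) ≠ m := by
    intro hh
    have h2 : k.succAbove x = k :=
      (Equiv.swap k m).injective (hh.trans (Equiv.swap_apply_left k m).symm)
    exact Fin.succAbove_ne k x h2
  obtain ⟨y, hy⟩ := Fin.exists_succAbove_eq h1
  have h2 : (((finSuccEquiv' k).symm.trans (Equiv.swap k m)).trans (finSuccEquiv' m)) (some x)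
      = some y := by
    simp only [Equiv.trans_apply, finSuccEquiv'_symm_some]
    rw [← hy, finSuccEquiv'_succAbove]
  have h3 := Equiv.removeNone_some _ ⟨y, h2⟩
  rw [h2] at h3
  have h4 := Option.some_injective _ h3
  rw [pairPerm, h4, hy]

lemma pairPerm_mul {N : ℕ} (k m : Fin (N+1)) : pairPerm m k * pairPerm k m = 1 := by
  apply Equiv.ext; intro x
  have h2 := pairPerm_prop m k (pairPerm k m x)
  rw [pairPerm_prop k m x, Equiv.swap_comm m k, Equiv.swap_apply_self] at h2
  have := Fin.succAbove_right_injective (p := k) h2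
  simpa [Equiv.Perm.mul_apply] using this

def dShift {N : ℕ} (k m : Fin (N+1)) : Equiv.Perm (Fin (N+1)) :=
  (finSuccEquiv' k).trans (finSuccEquiv' m).symm

lemma dShift_apply_self {N : ℕ} (k m : Fin (N+1)) : dShift k m k = m := by
  simp [dShift, finSuccEquiv'_at, finSuccEquiv'_symm_none]

lemma dShift_succAbove {N : ℕ} (k m : Fin (N+1)) (y : Fin N) :
    dShift k m (k.succAbove y) = m.succAbove y := by
  simp [dShift]

lemma dShift_mul {N : ℕ} (k l m : Fin (N+1)) : dShift l m * dShift k l = dShift k m := by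
  apply Equiv.ext; intro x
  simp [dShift, Equiv.Perm.mul_apply]

lemma dShift_self {N : ℕ} (k : Fin (N+1)) : dShift k k = 1 := by
  apply Equiv.ext; intro x
  simp [dShift]

lemma dShift_adj {N : ℕ} (k m : Fin (N+1)) (h : m.1 = k.1 + 1) :
    dShift k m = Equiv.swap k m := by
  apply Equiv.ext; intro x
  rcases eq_or_ne x k with rfl | hx
  · rw [dShift_apply_self, Equiv.swap_apply_left]
  · obtain ⟨y, rfl⟩ := Fin.exists_succAbove_eq hx
    rw [dShift_succAbove]
    rcases Nat.lt_trichotomy y.1 k.1 with hy | hy | hy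
    · rw [Equiv.swap_apply_of_ne_of_ne (Fin.succAbove_ne k y)
        (by intro hh; have := congrArg Fin.val hh; rw [val_succAbove, if_pos hy] at this; omega)]
      apply Fin.ext
      rw [val_succAbove, val_succAbove, if_pos hy, if_pos (by omega)]
    · have e2 : k.succAbove y = m := Fin.ext (by rw [val_succAbove, if_neg (by omega)]; omega)
      rw [e2, Equiv.swap_apply_right]
      apply Fin.ext
      rw [val_succAbove, if_pos (by omega)]
      omega
    · rw [Equiv.swap_apply_of_ne_of_ne (Fin.succAbove_ne k y)
        (by intro hh; have := congrArg Fin.val hh; rw [val_succAbove, if_neg (by omega)] at this; omega)]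
      apply Fin.ext
      rw [val_succAbove, val_succAbove, if_neg (by omega), if_neg (by omega)]

lemma sign_dShift {N : ℕ} : ∀ (d : ℕ) (k m : Fin (N+1)), m.1 = k.1 + d →
    Equiv.Perm.sign (dShift k m) = (-1)^d := by
  intro d
  induction d with
  | zero =>
    intro k m hm
    have : m = k := Fin.ext (by omega)
    subst this
    rw [dShift_self]
    simp
  | succ d ih =>
    intro k m hm
    have hl : k.1 + d < N+1 := by have := m.2; omega
    have h1 : dShift k m = dShift (⟨k.1+d, hl⟩ : Fin (N+1)) m * dShift k ⟨k.1+d, hl⟩ :=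
      (dShift_mul k ⟨k.1+d, hl⟩ m).symm
    rw [h1, _root_.map_mul, dShift_adj ⟨k.1+d, hl⟩ m (by simp; omega),
      Equiv.Perm.sign_swap (by intro hh; have := congrArg Fin.val hh; simp at this; omega),
      ih k ⟨k.1+d, hl⟩ rfl]
    rw [pow_succ]
    exact mul_comm _ _

lemma swap_eq_dShift_mul {N : ℕ} (k m : Fin (N+1)) :
    Equiv.swap k m = dShift k m * ((finSuccEquiv' k).symm.permCongr (pairPerm k m).optionCongr) := by
  apply Equiv.ext; intro x
  rcases eq_or_ne x k with rfl | hx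
  · rw [Equiv.swap_apply_left, Equiv.Perm.mul_apply, Equiv.permCongr_apply]
    simp only [Equiv.symm_symm, finSuccEquiv'_at, Equiv.optionCongr_apply, Option.map_none]
    rw [finSuccEquiv'_symm_none, dShift_apply_self]
  · obtain ⟨y, rfl⟩ := Fin.exists_succAbove_eq hx
    rw [Equiv.Perm.mul_apply, Equiv.permCongr_apply]
    simp only [Equiv.symm_symm, finSuccEquiv'_succAbove, Equiv.optionCongr_apply, Option.map_some]
    rw [finSuccEquiv'_symm_some, dShift_succAbove, pairPerm_prop]

lemma helperC (v c : ℂ) (h1 : v * c = 1) (h2 : v * v = 1) : c = v := by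
  linear_combination v * h1 - c * h2

lemma neg_one_sq_pow (a : ℕ) : (-1:ℂ)^a * (-1:ℂ)^a = 1 := by
  rw [← pow_add]
  exact Even.neg_one_pow ⟨a, rfl⟩

lemma sign_pairPerm_C_lt {N : ℕ} (k m : Fin (N+1)) (h : k.1 < m.1) :
    ((Equiv.Perm.sign (pairPerm k m) : ℤ) : ℂ) = -((-1)^(k:ℕ) * (-1)^(m:ℕ)) := by
  have hD := sign_dShift (m.1 - k.1) k m (by omega)
  have hkm : k ≠ m := by intro e; rw [e] at h; omega
  have hswap := congrArg Equiv.Perm.sign (swap_eq_dShift_mul k m)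
  rw [Equiv.Perm.sign_swap hkm, _root_.map_mul, Equiv.Perm.sign_permCongr, Equiv.optionCongr_sign,
    hD] at hswap
  -- hswap : -1 = (-1)^(m-k) * sign (pairPerm k m)  (in ℤˣ)
  have hC := congrArg (fun u : ℤˣ => ((u : ℤ) : ℂ)) hswap
  simp only [Units.val_mul, Units.val_neg, Units.val_one, Units.val_pow_eq_pow_val,
    Int.cast_mul, Int.cast_neg, Int.cast_one, Int.cast_pow] at hC
  -- hC : (-1 : ℂ) = (-1)^(m.1-k.1) * sign...
  have hd : (-1:ℂ)^(m.1 - k.1) = (-1)^(m:ℕ) * (-1)^(k:ℕ) := by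
    have h1 : (-1:ℂ)^(m:ℕ) = (-1)^(k.1) * (-1)^(m.1-k.1) := by
      rw [← pow_add]; congr 1; omega
    calc (-1:ℂ)^(m.1 - k.1) = ((-1:ℂ)^(k.1) * (-1:ℂ)^(k.1)) * (-1)^(m.1-k.1) := by
          rw [neg_one_sq_pow]; ring
      _ = (-1)^(m:ℕ) * (-1)^(k:ℕ) := by rw [h1]; ring
  refine helperC _ _ ?_ ?_
  · linear_combination hC + ((Equiv.Perm.sign (pairPerm k m) : ℤ) : ℂ) * hd
  · rw [show (-((-1:ℂ)^(k:ℕ) * (-1)^(m:ℕ))) * (-((-1:ℂ)^(k:ℕ) * (-1)^(m:ℕ)))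
      = ((-1:ℂ)^(k:ℕ) * (-1:ℂ)^(k:ℕ)) * ((-1:ℂ)^(m:ℕ) * (-1:ℂ)^(m:ℕ)) from by ring,
      neg_one_sq_pow, neg_one_sq_pow, mul_one]

lemma sign_pairPerm_C {N : ℕ} (k m : Fin (N+1)) (h : k ≠ m) :
    ((Equiv.Perm.sign (pairPerm k m) : ℤ) : ℂ) = -((-1)^(k:ℕ) * (-1)^(m:ℕ)) := by
  rcases Nat.lt_or_ge k.1 m.1 with hlt | hge
  · exact sign_pairPerm_C_lt k m hlt
  · have hlt : m.1 < k.1 := by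
      have hne : k.1 ≠ m.1 := fun hh => h (Fin.ext hh)
      omega
    have h1 := sign_pairPerm_C_lt m k hlt
    have h2 := congrArg Equiv.Perm.sign (pairPerm_mul k m)
    rw [_root_.map_mul, _root_.map_one] at h2
    have h3 := congrArg (fun u : ℤˣ => ((u : ℤ) : ℂ)) h2
    simp only [Units.val_mul, Int.cast_mul, Units.val_one, Int.cast_one] at h3
    rw [h1] at h3
    refine helperC _ _ ?_ ?_
    · linear_combination h3
    · rw [show (-((-1:ℂ)^(k:ℕ) * (-1)^(m:ℕ))) * (-((-1:ℂ)^(k:ℕ) * (-1)^(m:ℕ)))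
        = ((-1:ℂ)^(k:ℕ) * (-1:ℂ)^(k:ℕ)) * ((-1:ℂ)^(m:ℕ) * (-1:ℂ)^(m:ℕ)) from by ring,
        neg_one_sq_pow, neg_one_sq_pow, mul_one]

abbrev e0 {n : ℕ} (t : Fin n) : Fin (2*n) := ⟨2*t.1, by have := t.2; omega⟩
abbrev e1 {n : ℕ} (t : Fin n) : Fin (2*n) := ⟨2*t.1+1, by have := t.2; omega⟩

noncomputable def pfTerm {n : ℕ} (A : Matrix (Fin (2*n+1)) (Fin (2*n+1)) ℂ) (j : Fin (2*n+1))
    (p : Fin (2*n+1) × Equiv.Perm (Fin (2*n))) : ℂ :=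
  (-1:ℂ)^(p.1:ℕ) * A j p.1 * ((Equiv.Perm.sign p.2 : ℤ) : ℂ) *
    ∏ t : Fin n, A (p.1.succAbove (p.2 (e0 t))) (p.1.succAbove (p.2 (e1 t)))

noncomputable def invo {n : ℕ} (j : Fin (2*n+1)) (p : Fin (2*n+1) × Equiv.Perm (Fin (2*n))) :
    Fin (2*n+1) × Equiv.Perm (Fin (2*n)) :=
  if h : p.1 = j then p
  else (p.1.succAbove (p.2 (flip2 (p.2⁻¹ (unsucc p.1 j (Ne.symm h))))),
    pairPerm p.1 (p.1.succAbove (p.2 (flip2 (p.2⁻¹ (unsucc p.1 j (Ne.symm h)))))) * p.2)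

lemma invo_pos {n : ℕ} (j : Fin (2*n+1)) (p : Fin (2*n+1) × Equiv.Perm (Fin (2*n)))
    (h : p.1 = j) : invo j p = p := by
  unfold invo
  rw [dif_pos h]

lemma invo_neg {n : ℕ} (j k : Fin (2*n+1)) (σ : Equiv.Perm (Fin (2*n))) (h : k ≠ j) :
    invo j (k, σ) = (k.succAbove (σ (flip2 (σ⁻¹ (unsucc k j (Ne.symm h))))),
      pairPerm k (k.succAbove (σ (flip2 (σ⁻¹ (unsucc k j (Ne.symm h)))))) * σ) := by
  unfold invo
  rw [dif_neg (show (k, σ).1 ≠ j from h)]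

lemma invo_invo {n : ℕ} (j : Fin (2*n+1)) (p : Fin (2*n+1) × Equiv.Perm (Fin (2*n))) :
    invo j (invo j p) = p := by
  obtain ⟨k, σ⟩ := p
  by_cases h : k = j
  · rw [invo_pos j (k, σ) h, invo_pos j (k, σ) h]
  · rw [invo_neg j k σ h]
    generalize hjk : unsucc k j (Ne.symm h) = jk
    generalize hq : σ⁻¹ jk = q
    generalize hq' : flip2 q = q'
    generalize hm : k.succAbove (σ q') = m
    have hkjk : k.succAbove jk = j := by rw [← hjk]; exact succAbove_unsucc k j (Ne.symm h)
    have hσq : σ q = jk := by rw [← hq, show σ (σ⁻¹ jk) = jk from Equiv.apply_symm_apply σ jk]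
    have hmk : m ≠ k := by rw [← hm]; exact Fin.succAbove_ne k _
    have hmj : m ≠ j := by
      rw [← hm]; intro he
      have h1 : σ q' = jk := Fin.succAbove_right_injective (p := k) (he.trans hkjk.symm)
      have h2 : q' = q := by
        calc q' = σ⁻¹ (σ q') := (Equiv.symm_apply_apply σ q' : σ⁻¹ (σ q') = q').symm
          _ = σ⁻¹ jk := by rw [h1]
          _ = q := hq
      exact flip2_ne q (hq'.trans h2)
    rw [invo_neg j m (pairPerm k m * σ) hmj]
    generalize hjm : unsucc m j (Ne.symm hmj) = jm
    have hmjm : m.succAbove jm = j := by rw [← hjm]; exact succAbove_unsucc m j (Ne.symm hmj)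
    have hψjk : pairPerm k m jk = jm := by
      apply Fin.succAbove_right_injective (p := m)
      rw [pairPerm_prop, hkjk, hmjm]
      exact Equiv.swap_apply_of_ne_of_ne (Ne.symm h) (Ne.symm hmj)
    have hinv : (pairPerm k m * σ)⁻¹ jm = q := by
      rw [_root_.mul_inv_rev, Equiv.Perm.mul_apply, ← hψjk, show (pairPerm k m)⁻¹ (pairPerm k m jk) = jk from Equiv.symm_apply_apply (pairPerm k m) jk, hq]
    have happ : (pairPerm k m * σ) q' = pairPerm k m (σ q') := Equiv.Perm.mul_apply _ _ _
    have hfst : m.succAbove ((pairPerm k m * σ) (flip2 ((pairPerm k m * σ)⁻¹ jm))) = k := by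
      rw [hinv, hq', happ, pairPerm_prop, hm, Equiv.swap_apply_right]
    rw [hfst, ← mul_assoc, pairPerm_mul, one_mul]

lemma invo_ne {n : ℕ} (j : Fin (2*n+1)) (p : Fin (2*n+1) × Equiv.Perm (Fin (2*n)))
    (h : p.1 ≠ j) : invo j p ≠ p := by
  obtain ⟨k, σ⟩ := p
  rw [invo_neg j k σ h]
  intro he
  exact Fin.succAbove_ne k _ (congrArg Prod.fst he)

lemma pfTerm_zero {n : ℕ} (A : Matrix (Fin (2*n+1)) (Fin (2*n+1)) ℂ)
    (hA : ∀ a b, A a b = - A b a) (j : Fin (2*n+1))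
    (p : Fin (2*n+1) × Equiv.Perm (Fin (2*n))) (h : p.1 = j) : pfTerm A j p = 0 := by
  have hdiag : A j j = 0 := add_self_eq_zero.mp (by linear_combination hA j j)
  simp [pfTerm, h, hdiag]

lemma pfTerm_add {n : ℕ} (A : Matrix (Fin (2*n+1)) (Fin (2*n+1)) ℂ)
    (hA : ∀ a b, A a b = - A b a) (j : Fin (2*n+1))
    (p : Fin (2*n+1) × Equiv.Perm (Fin (2*n))) :
    pfTerm A j p + pfTerm A j (invo j p) = 0 := by
  obtain ⟨k, σ⟩ := p
  by_cases h : k = j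
  · rw [invo_pos j (k, σ) h, pfTerm_zero A hA j (k, σ) h, add_zero]
  · rw [invo_neg j k σ h]
    generalize hjk : unsucc k j (Ne.symm h) = jk
    generalize hq : σ⁻¹ jk = q
    generalize hq' : flip2 q = q'
    generalize hm : k.succAbove (σ q') = m
    have hq'v : q'.1 = if q.1 % 2 = 0 then q.1 + 1 else q.1 - 1 := by rw [← hq']; rfl
    have hq'cases : (q.1 % 2 = 0 ∧ q'.1 = q.1 + 1) ∨ (q.1 % 2 = 1 ∧ q.1 = q'.1 + 1) := by
      split_ifs at hq'v with hpar
      · exact Or.inl ⟨hpar, hq'v⟩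
      · exact Or.inr ⟨by omega, by omega⟩
    have hkjk : k.succAbove jk = j := by rw [← hjk]; exact succAbove_unsucc k j (Ne.symm h)
    have hσq : σ q = jk := by rw [← hq, show σ (σ⁻¹ jk) = jk from Equiv.apply_symm_apply σ jk]
    have hmk : m ≠ k := by rw [← hm]; exact Fin.succAbove_ne k _
    have hmj : m ≠ j := by
      rw [← hm]; intro he
      have h1 : σ q' = jk := Fin.succAbove_right_injective (p := k) (he.trans hkjk.symm)
      have h2 : q' = q := by
        calc q' = σ⁻¹ (σ q') := (Equiv.symm_apply_apply σ q' : σ⁻¹ (σ q') = q').symm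
          _ = σ⁻¹ jk := by rw [h1]
          _ = q := hq
      exact flip2_ne q (hq'.trans h2)
    simp only [pfTerm]
    have hsgn : ((Equiv.Perm.sign (pairPerm k m * σ) : ℤ) : ℂ)
        = -((-1:ℂ)^(k:ℕ) * (-1:ℂ)^(m:ℕ)) * ((Equiv.Perm.sign σ : ℤ) : ℂ) := by
      rw [show Equiv.Perm.sign (pairPerm k m * σ)
          = Equiv.Perm.sign (pairPerm k m) * Equiv.Perm.sign σ from _root_.map_mul _ _ _,
        Units.val_mul, Int.cast_mul, sign_pairPerm_C k m (Ne.symm hmk)]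
    rw [hsgn]
    have hswap : ∀ x : Fin (2*n), m.succAbove ((pairPerm k m * σ) x)
        = Equiv.swap k m (k.succAbove (σ x)) := fun x => by
      rw [Equiv.Perm.mul_apply, pairPerm_prop]
    have hfix : ∀ x : Fin (2*n), x ≠ q' →
        Equiv.swap k m (k.succAbove (σ x)) = k.succAbove (σ x) := by
      intro x hx
      refine Equiv.swap_apply_of_ne_of_ne (Fin.succAbove_ne k _) ?_
      intro he
      exact hx (σ.injective (Fin.succAbove_right_injective (p := k) (he.trans hm.symm)))
    have ht0lt : q.1/2 < n := by have := q.2; omega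
    have hR : ∏ t ∈ Finset.univ.erase (⟨q.1/2, ht0lt⟩ : Fin n),
          A (m.succAbove ((pairPerm k m * σ) (e0 t))) (m.succAbove ((pairPerm k m * σ) (e1 t)))
        = ∏ t ∈ Finset.univ.erase (⟨q.1/2, ht0lt⟩ : Fin n),
          A (k.succAbove (σ (e0 t))) (k.succAbove (σ (e1 t))) := by
      refine Finset.prod_congr rfl fun t ht => ?_
      have htne := Finset.ne_of_mem_erase ht
      have hx0 : e0 t ≠ q' := by
        intro he
        refine htne (Fin.ext ?_)
        show t.1 = q.1/2
        have h1 : 2*t.1 = q'.1 := by rw [← he]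
        rcases hq'cases with ⟨h4,h5⟩|⟨h4,h5⟩ <;> omega
      have hx1 : e1 t ≠ q' := by
        intro he
        refine htne (Fin.ext ?_)
        show t.1 = q.1/2
        have h1 : 2*t.1+1 = q'.1 := by rw [← he]
        rcases hq'cases with ⟨h4,h5⟩|⟨h4,h5⟩ <;> omega
      rw [hswap, hswap, hfix _ hx0, hfix _ hx1]
    rw [← Finset.mul_prod_erase Finset.univ _ (Finset.mem_univ (⟨q.1/2, ht0lt⟩ : Fin n)),
      ← Finset.mul_prod_erase Finset.univ
        (fun t => A (m.succAbove ((pairPerm k m * σ) (e0 t)))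
          (m.succAbove ((pairPerm k m * σ) (e1 t)))) (Finset.mem_univ (⟨q.1/2, ht0lt⟩ : Fin n)),
      hR]
    have hy := neg_one_sq_pow (m:ℕ)
    rcases Nat.even_or_odd q.1 with hev | hod
    · obtain ⟨c, hc⟩ := hev
      have ha : e0 (⟨q.1/2, ht0lt⟩ : Fin n) = q := by
        apply Fin.ext
        show 2*(q.1/2) = q.1
        omega
      have hb : e1 (⟨q.1/2, ht0lt⟩ : Fin n) = q' := by
        apply Fin.ext
        show 2*(q.1/2)+1 = q'.1
        rcases hq'cases with ⟨h4,h5⟩|⟨h4,h5⟩ <;> omega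
      rw [hswap (e0 _), hswap (e1 _), ha, hb, hσq, hkjk, hm,
        Equiv.swap_apply_of_ne_of_ne (Ne.symm h) (Ne.symm hmj), Equiv.swap_apply_right]
      linear_combination (-( (-1:ℂ)^(k:ℕ) * A j k * ((Equiv.Perm.sign σ : ℤ) : ℂ) * A j m *
        ∏ t ∈ Finset.univ.erase (⟨q.1/2, ht0lt⟩ : Fin n),
          A (k.succAbove (σ (e0 t))) (k.succAbove (σ (e1 t))))) * hy
    · obtain ⟨c, hc⟩ := hod
      have ha : e0 (⟨q.1/2, ht0lt⟩ : Fin n) = q' := by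
        apply Fin.ext
        show 2*(q.1/2) = q'.1
        rcases hq'cases with ⟨h4,h5⟩|⟨h4,h5⟩ <;> omega
      have hb : e1 (⟨q.1/2, ht0lt⟩ : Fin n) = q := by
        apply Fin.ext
        show 2*(q.1/2)+1 = q.1
        omega
      rw [hswap (e0 _), hswap (e1 _), ha, hb, hσq, hkjk, hm,
        Equiv.swap_apply_of_ne_of_ne (Ne.symm h) (Ne.symm hmj), Equiv.swap_apply_right,
        hA m j, hA k j]
      linear_combination ((-1:ℂ)^(k:ℕ) * A j k * ((Equiv.Perm.sign σ : ℤ) : ℂ) * A j m *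
        ∏ t ∈ Finset.univ.erase (⟨q.1/2, ht0lt⟩ : Fin n),
          A (k.succAbove (σ (e0 t))) (k.succAbove (σ (e1 t)))) * hy

lemma key {n : ℕ} (A : Matrix (Fin (2*n+1)) (Fin (2*n+1)) ℂ)
    (hA : ∀ a b, A a b = - A b a) (j : Fin (2*n+1)) :
    ∑ k : Fin (2*n+1), (-1:ℂ)^(k:ℕ) * A j k *
      pfC n (A.submatrix k.succAbove k.succAbove) = 0 := by
  classical
  have hstep : ∀ k : Fin (2*n+1), (-1:ℂ)^(k:ℕ) * A j k *
        pfC n (A.submatrix k.succAbove k.succAbove)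
      = (1 / ((2:ℂ)^n * n.factorial)) * ∑ σ : Equiv.Perm (Fin (2*n)), pfTerm A j (k, σ) := by
    intro k
    rw [pfC, mul_left_comm, Finset.mul_sum]
    refine congrArg (fun z => 1 / ((2:ℂ)^n * n.factorial) * z)
      (Finset.sum_congr rfl fun σ _ => ?_)
    simp only [pfTerm, Matrix.submatrix_apply]
    ring
  rw [Finset.sum_congr rfl fun k _ => hstep k, ← Finset.mul_sum, ← Fintype.sum_prod_type]
  rw [show (∑ p : Fin (2*n+1) × Equiv.Perm (Fin (2*n)), pfTerm A j p) = 0 from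
    Finset.sum_ninvolution (invo j) (pfTerm_add A hA j)
      (fun p hp => by
        by_cases hpj : p.1 = j
        · exact absurd (pfTerm_zero A hA j p hpj) hp
        · exact invo_ne j p hpj)
      (fun p => Finset.mem_univ _) (invo_invo j)]
  exact mul_zero _

end Stmt17Aux


/-- skew-orthogonality of the even Pfaffian polynomials: let
`⟨·,·⟩ = B` be a skew-symmetric bilinear form on `ℂ[z]` with moments
`μ_{ij} = ⟨z^i, z^j⟩`, such that `Pf((μ_{ij})_{0≤i,j≤2m-1}) ≠ 0` for all `m`.
Let `τ_{2n+1}` be the Pfaffian of the bordered matrix `M` (top-left block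
`(μ_{ij})_{0≤i,j≤2n}`, border the moments `ν_k`), assumed nonzero, and set
`P_{2n}(z) = τ_{2n+1}⁻¹ ∑_{k=0}^{2n} (-1)^k Pf((μ_{ij})_{i,j≠k}) z^k`.
Then `⟨z^j, P_{2n}⟩ = 0` for all `0 ≤ j ≤ 2n-1`. -/
theorem stmt17 (B : Polynomial ℂ →ₗ[ℂ] Polynomial ℂ →ₗ[ℂ] ℂ)
    (hskew : ∀ f g, B f g = -B g f)
    (hnz : ∀ m : ℕ,
      pfC m (Matrix.of fun i j : Fin (2 * m) => B (X ^ (i : ℕ)) (X ^ (j : ℕ))) ≠ 0)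
    (n : ℕ) (ν : Fin (2 * n + 1) → ℂ)
    (M : Matrix (Fin (2 * (n + 1))) (Fin (2 * (n + 1))) ℂ)
    (hM1 : ∀ i j : Fin (2 * n + 1), M i.castSucc j.castSucc = B (X ^ (i : ℕ)) (X ^ (j : ℕ)))
    (hM2 : ∀ i : Fin (2 * n + 1), M i.castSucc (Fin.last (2 * n + 1)) = ν i)
    (hM3 : ∀ j : Fin (2 * n + 1), M (Fin.last (2 * n + 1)) j.castSucc = -ν j)
    (hM4 : M (Fin.last (2 * n + 1)) (Fin.last (2 * n + 1)) = 0)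
    (hτ : pfC (n + 1) M ≠ 0)
    (P : Polynomial ℂ)
    (hP : P = (pfC (n + 1) M)⁻¹ •
      ∑ k : Fin (2 * n + 1),
        ((-1 : ℂ) ^ (k : ℕ) *
            pfC n ((Matrix.of fun i j : Fin (2 * n + 1) =>
              B (X ^ (i : ℕ)) (X ^ (j : ℕ))).submatrix k.succAbove k.succAbove)) •
          (X ^ (k : ℕ) : Polynomial ℂ))
    (j : ℕ) (hj : j < 2 * n) :
    B (X ^ j) P = 0 := by
  subst hP
  simp only [_root_.map_smul, _root_.map_sum, smul_eq_mul]
  have hkey := Stmt17Aux.key (n := n)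
    (Matrix.of fun a b : Fin (2*n+1) => B (X^(a:ℕ)) (X^(b:ℕ)))
    (fun a b => by simpa using hskew (X^(a:ℕ)) (X^(b:ℕ))) ⟨j, by omega⟩
  rw [Finset.sum_congr rfl (fun (k : Fin (2*n+1)) (_ : k ∈ Finset.univ) =>
    show ((-1:ℂ)^(k:ℕ) * pfC n ((Matrix.of fun a b : Fin (2*n+1) =>
        B (X^(a:ℕ)) (X^(b:ℕ))).submatrix k.succAbove k.succAbove)) * (B (X^j)) (X^(k:ℕ))
      = (-1:ℂ)^(k:ℕ) * (Matrix.of fun a b : Fin (2*n+1) => B (X^(a:ℕ)) (X^(b:ℕ)))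
          (⟨j, by omega⟩ : Fin (2*n+1)) k *
        pfC n ((Matrix.of fun a b : Fin (2*n+1) =>
          B (X^(a:ℕ)) (X^(b:ℕ))).submatrix k.succAbove k.succAbove)
      from by rw [Matrix.of_apply]; ring), hkey, mul_zero]
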